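/- Every signed permutation x on a finite set I is congruent, modulo the subspace M_I, to a ℚ-linear combination of B-snakes on I; i.e., the composite ℚ⟨𝔄^B_I⟩ → ℚ⟨𝔖^B_I⟩/M_I is surjective. -/

import Mathlib

open scoped BigOperators

/-- `ent l i` is the entry `x_i` of the word `l = [x_r, …, x_1]` (1-indexed from the right),
and `0` out of range. -/
def ent (l : List ℤ) (i : ℕ) : ℤ :=
  if 1 ≤ i ∧ i ≤ l.length then l.getD (l.length - i) 0 else 0

/-- Build the word `[g r, g (r-1), …, g 1]`. -/
def build (r : ℕ) (g : ℕ → ℤ) : List ℤ :=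
  (List.range r).map (fun j => g (r - j))

/-- A signed permutation on `I`, written as the word `x_r ⋯ x_1`. -/
def IsSignedPerm (I : Finset ℕ) (l : List ℤ) : Prop :=
  l.length = I.card ∧ (∀ z ∈ l, z.natAbs ∈ I) ∧ (l.map Int.natAbs).Nodup

/-- A `B`-snake on `I`: a signed permutation with `0 < x_r > x_{r-1} < x_{r-2} > ⋯ x_1`. -/
def IsBSnake (I : Finset ℕ) (l : List ℤ) : Prop :=
  IsSignedPerm I l ∧ (0 < l.length → 0 < ent l l.length) ∧
  ∀ k, 1 ≤ k → k + 1 ≤ l.length →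
    if (l.length - k) % 2 = 1 then ent l k < ent l (k + 1)
    else ent l (k + 1) < ent l k

/-- Restrictability of a word on `I1 ∪ I2` to the pair `(I1, I2)`. -/
def Restrictable (I1 I2 : Finset ℕ) (l : List ℤ) : Prop :=
  ∀ i, 1 ≤ i → i ≤ (l.length - 1) / 2 →
    ({(ent l (2*i-1)).natAbs, (ent l (2*i)).natAbs} : Finset ℕ) ⊆ I1 ∨
    ({(ent l (2*i-1)).natAbs, (ent l (2*i)).natAbs} : Finset ℕ) ⊆ I2

/-- `κ_{(I1,I2)}(z)`: the number of pairs `(z_{2i-1}, z_{2j-1})` with `|z_{2i-1}| ∈ I1`,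
`|z_{2j-1}| ∈ I2` and `⌊(ℓ+1)/2⌋ ≥ i > j ≥ 1`. -/
def kappa (I1 I2 : Finset ℕ) (l : List ℤ) : ℕ :=
  (((Finset.Icc 1 ((l.length + 1) / 2)) ×ˢ (Finset.Icc 1 ((l.length + 1) / 2))).filter
    (fun p => p.2 < p.1 ∧ (ent l (2*p.1-1)).natAbs ∈ I1 ∧ (ent l (2*p.2-1)).natAbs ∈ I2)).card

/-- The subpermutation `ρ_J`. -/
def rho (J : Finset ℕ) (l : List ℤ) : List ℤ :=
  l.filter (fun a => decide (a.natAbs ∈ J))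

/-- `P_J` relative to the ambient index set `I`. -/
def Psub (I J : Finset ℕ) (l : List ℤ) : List ℤ :=
  if (I.card + J.card) % 2 = 0 then rho J l else rho J (l.map (fun a => -a))

/-- The free `ℚ`-vector space on all words. -/
abbrev FreeV : Type := (List ℤ) →₀ ℚ

/-- The basis vector of a word. -/
noncomputable def sv (l : List ℤ) : FreeV := Finsupp.single l 1

def swapPair (x : List ℤ) (i : ℕ) : List ℤ :=
  build x.length (fun k =>
    if k = 2*i - 1 then ent x (2*i) else if k = 2*i then ent x (2*i-1) else ent x k)

/-- relation `ℋ₁`. -/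
noncomputable def H1 (x : List ℤ) (i : ℕ) : FreeV := sv x + sv (swapPair x i)

def arr4 (x : List ℤ) (i : ℕ) (p q s t : ℤ) : List ℤ :=
  build x.length (fun k =>
    if k = 2*i+2 then p else if k = 2*i+1 then q else if k = 2*i then s
    else if k = 2*i-1 then t else ent x k)

/-- relation `ℋ₂`. -/
noncomputable def H2 (x : List ℤ) (i : ℕ) : FreeV :=
  sv (arr4 x i (ent x (2*i+2)) (ent x (2*i+1)) (ent x (2*i)) (ent x (2*i-1)))
  - sv (arr4 x i (ent x (2*i+2)) (ent x (2*i)) (ent x (2*i+1)) (ent x (2*i-1)))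
  + sv (arr4 x i (ent x (2*i+1)) (ent x (2*i)) (ent x (2*i+2)) (ent x (2*i-1)))
  + sv (arr4 x i (ent x (2*i+2)) (ent x (2*i-1)) (ent x (2*i+1)) (ent x (2*i)))
  - sv (arr4 x i (ent x (2*i+1)) (ent x (2*i-1)) (ent x (2*i+2)) (ent x (2*i)))
  + sv (arr4 x i (ent x (2*i)) (ent x (2*i-1)) (ent x (2*i+2)) (ent x (2*i+1)))

/-- relation `ℋ₃` (for `|I|` odd). -/
noncomputable def H3 (x : List ℤ) : FreeV :=
  sv x + sv (build x.length (fun k => if k = x.length then -ent x k else ent x k))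

def top2 (x : List ℤ) (p q : ℤ) : List ℤ :=
  build x.length (fun k =>
    if k = x.length then p else if k = x.length - 1 then q else ent x k)

/-- relation `ℋ₄` (for `|I|` even). -/
noncomputable def H4 (x : List ℤ) : FreeV :=
  sv (top2 x (ent x x.length) (ent x (x.length - 1)))
  - sv (top2 x (ent x x.length) (-ent x (x.length - 1)))
  + sv (top2 x (ent x (x.length - 1)) (-ent x x.length))
  - sv (top2 x (-ent x (x.length - 1)) (-ent x x.length))

def top3 (x : List ℤ) (p q s : ℤ) : List ℤ :=
  build x.length (fun k =>
    if k = x.length then p else if k = x.length - 1 then q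
    else if k = x.length - 2 then s else ent x k)

/-- relation `ℋ₅` (for `|I|` odd, `|I| ≥ 3`). -/
noncomputable def H5 (x : List ℤ) : FreeV :=
  sv (top3 x (ent x x.length) (ent x (x.length-1)) (ent x (x.length-2)))
  - sv (top3 x (ent x x.length) (-ent x (x.length-1)) (ent x (x.length-2)))
  + sv (top3 x (ent x x.length) (-ent x (x.length-2)) (ent x (x.length-1)))
  - sv (top3 x (ent x x.length) (-ent x (x.length-2)) (-ent x (x.length-1)))
  - sv (top3 x (ent x (x.length-1)) (ent x x.length) (ent x (x.length-2)))
  + sv (top3 x (ent x (x.length-1)) (-ent x x.length) (ent x (x.length-2)))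
  - sv (top3 x (ent x (x.length-1)) (-ent x (x.length-2)) (ent x x.length))
  + sv (top3 x (ent x (x.length-1)) (-ent x (x.length-2)) (-ent x x.length))
  + sv (top3 x (ent x (x.length-2)) (ent x x.length) (ent x (x.length-1)))
  - sv (top3 x (ent x (x.length-2)) (-ent x x.length) (ent x (x.length-1)))
  + sv (top3 x (ent x (x.length-2)) (-ent x (x.length-1)) (ent x x.length))
  - sv (top3 x (ent x (x.length-2)) (-ent x (x.length-1)) (-ent x x.length))

/-- The relation subspace `M_I` spanned by `ℋ₁, …, ℋ₅`. -/
noncomputable def Mrel (I : Finset ℕ) : Submodule ℚ FreeV :=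
  Submodule.span ℚ
    ({v | ∃ x i, IsSignedPerm I x ∧ 1 ≤ i ∧ i ≤ I.card / 2 ∧ v = H1 x i} ∪
     {v | ∃ x i, IsSignedPerm I x ∧ 1 ≤ i ∧ i + 1 ≤ I.card / 2 ∧ v = H2 x i} ∪
     {v | ∃ x, IsSignedPerm I x ∧ I.card % 2 = 1 ∧ v = H3 x} ∪
     {v | ∃ x, IsSignedPerm I x ∧ I.card % 2 = 0 ∧ v = H4 x} ∪
     {v | ∃ x, IsSignedPerm I x ∧ I.card % 2 = 1 ∧ 3 ≤ I.card ∧ v = H5 x})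

/-- `ℚ⟨𝔖^B_I⟩`, the span of the signed permutations on `I`. -/
noncomputable def SP (I : Finset ℕ) : Submodule ℚ FreeV :=
  Submodule.span ℚ {v | ∃ x, IsSignedPerm I x ∧ v = sv x}

-- The expansion of (the class of) `x` in the basis of `B`-snakes modulo `M_I`;
-- `snakeCoeff I x α` is the coefficient `C^α_x`.
open scoped Classical in
noncomputable def snakeCoeff (I : Finset ℕ) (x : List ℤ) : FreeV :=
  if h : ∃! c : FreeV, ((c.support : Set (List ℤ)) ⊆ {y | IsBSnake I y}) ∧
      (sv x - c.sum fun y q => q • sv y) ∈ Mrel I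
  then h.choose else 0

/-- The cup product `α ⌣ β` for snakes `α` on `I1` and `β` on `I2`. -/
noncomputable def cup (I1 I2 : Finset ℕ) (α β : List ℤ) : FreeV :=
  if Disjoint I1 I2 ∧ (I1.card * I2.card) % 2 = 0 then
    ∑ᶠ z ∈ {z : List ℤ | IsBSnake (I1 ∪ I2) z ∧ Restrictable I1 I2 z},
      (((-1 : ℚ) ^ kappa I1 I2 z) * snakeCoeff I1 (Psub (I1 ∪ I2) I1 z) α
        * snakeCoeff I2 (Psub (I1 ∪ I2) I2 z) β) • sv z
  else 0

/-- The relation `≺` on words of the same length. -/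
def precRel (x y : List ℤ) : Prop :=
  ∃ i, 1 ≤ i ∧ i ≤ x.length / 2 ∧
    ent x (2*i-1) + ent x (2*i+1) < ent y (2*i-1) + ent y (2*i+1) ∧
    ∀ j, 1 ≤ j → j < i →
      ent x (2*j-1) + ent x (2*j+1) = ent y (2*j-1) + ent y (2*j+1)

/-- The relation `◁`. -/
def triRel (x y : List ℤ) : Prop :=
  if x.length % 2 = 1 then precRel x y
  else precRel (x.map (fun a => -a)) (y.map (fun a => -a))

/-- The relation `⊴`. -/
def tle (x y : List ℤ) : Prop := triRel x y ∨ x = y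

/-- `F_i(x)`. -/
def Fset (x : List ℤ) (i : ℕ) : Finset ℤ :=
  if x.length % 2 = 1 then (Finset.Icc 1 (2*i-1)).image (ent x)
  else (Finset.Icc 1 (2*i-1)).image (fun k => -ent x k)

/-- `x*`: swap the entries in each block of two, and negate the leading entry if the
length is odd. -/
def star (x : List ℤ) : List ℤ :=
  build x.length (fun k =>
    if x.length % 2 = 1 ∧ k = x.length then -ent x k
    else if k % 2 = 1 then ent x (k+1) else ent x (k-1))


/-!
Straightening. Call the pair `x_{2i} x_{2i-1}` of `x = x_r ⋯ x_1` its block `i`. A signed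
permutation that is not a `B`-snake has a defect: a block ordered against the snake pattern, two
adjacent blocks whose neighbouring entries are, or a defect among the top two or three entries.
The relation matching the defect (`ℋ₁`; `ℋ₂`; `ℋ₃`, `ℋ₄` followed by `ℋ₁`, or `ℋ₅`) writes `x`
modulo `M_I` through signed permutations that are smaller in the lexicographic order of
(block potential `∑ᵢ ±(i - ⌊r/2⌋)(x_{2i} + x_{2i-1})`, top defect, number of block defects):
`ℋ₂` lowers the potential, the other relations keep it and lower one of the two counts.
Well-founded induction on this measure concludes.
-/

section Words

@[simp]
theorem length_build (r : ℕ) (g : ℕ → ℤ) : (build r g).length = r := by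
  simp [build]

theorem ent_eq_zero {l : List ℤ} {k : ℕ} (h : k = 0 ∨ l.length < k) : ent l k = 0 := by
  unfold ent
  rw [if_neg]
  omega

theorem ent_build {r : ℕ} (g : ℕ → ℤ) {k : ℕ} (h1 : 1 ≤ k) (h2 : k ≤ r) :
    ent (build r g) k = g k := by
  unfold ent
  rw [if_pos (by rw [length_build]; exact ⟨h1, h2⟩), length_build,
    List.getD_eq_getElem _ _ (by simp; omega)]
  simp only [build, List.getElem_map, List.getElem_range]
  congr 1
  omega

theorem build_congr {r : ℕ} {f g : ℕ → ℤ} (h : ∀ k, 1 ≤ k → k ≤ r → f k = g k) :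
    build r f = build r g :=
  List.map_congr_left fun j hj => h _ (by simp at hj; omega) (by omega)

theorem build_ent (x : List ℤ) : build x.length (ent x) = x := by
  apply List.ext_getElem (by simp)
  intro n h1 _
  simp only [length_build] at h1
  simp only [build, List.getElem_map, List.getElem_range]
  unfold ent
  rw [if_pos (by omega), List.getD_eq_getElem _ _ (by omega)]
  congr 1
  omega

theorem ent_build_of_eq (x : List ℤ) {g : ℕ → ℤ} {k : ℕ}
    (h : 1 ≤ k → k ≤ x.length → g k = ent x k) : ent (build x.length g) k = ent x k := by
  by_cases hk : 1 ≤ k ∧ k ≤ x.length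
  · rw [ent_build g hk.1 hk.2, h hk.1 hk.2]
  · rw [ent_eq_zero (by simp; omega), ent_eq_zero (by omega)]

theorem ent_mem (l : List ℤ) {k : ℕ} (h1 : 1 ≤ k) (h2 : k ≤ l.length) : ent l k ∈ l := by
  unfold ent
  rw [if_pos ⟨h1, h2⟩, List.getD_eq_getElem _ _ (by omega)]
  exact List.getElem_mem _

end Words

section Rearrangements

variable (x : List ℤ) {i : ℕ} (p q s t : ℤ)

theorem arr4_self :
    arr4 x i (ent x (2*i+2)) (ent x (2*i+1)) (ent x (2*i)) (ent x (2*i-1)) = x := by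
  conv_rhs => rw [← build_ent x]
  refine build_congr fun k _ _ => ?_
  split_ifs with h h h h <;> first | rw [h] | rfl

theorem top2_self : top2 x (ent x x.length) (ent x (x.length - 1)) = x := by
  conv_rhs => rw [← build_ent x]
  refine build_congr fun k _ _ => ?_
  split_ifs with h h <;> first | rw [h] | rfl

theorem top3_self :
    top3 x (ent x x.length) (ent x (x.length - 1)) (ent x (x.length - 2)) = x := by
  conv_rhs => rw [← build_ent x]
  refine build_congr fun k _ _ => ?_
  split_ifs with h h h <;> first | rw [h] | rfl

theorem ent_top2_of_ne {k : ℕ} (h1 : k ≠ x.length) (h2 : k ≠ x.length - 1) :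
    ent (top2 x p q) k = ent x k :=
  ent_build_of_eq x fun _ _ => by rw [if_neg h1, if_neg h2]

theorem ent_top3_of_ne {k : ℕ} (h1 : k ≠ x.length) (h2 : k ≠ x.length - 1)
    (h3 : k ≠ x.length - 2) : ent (top3 x p q s) k = ent x k :=
  ent_build_of_eq x fun _ _ => by rw [if_neg h1, if_neg h2, if_neg h3]

theorem ent_arr4_of_ne {k : ℕ} (h1 : k ≠ 2*i+2) (h2 : k ≠ 2*i+1)
    (h3 : k ≠ 2*i) (h4 : k ≠ 2*i-1) : ent (arr4 x i p q s t) k = ent x k :=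
  ent_build_of_eq x fun _ _ => by rw [if_neg h1, if_neg h2, if_neg h3, if_neg h4]

theorem ent_top2_length (hr : 1 ≤ x.length) : ent (top2 x p q) x.length = p := by
  rw [top2, ent_build _ hr le_rfl, if_pos rfl]

theorem ent_top2_length_sub_one (hr : 2 ≤ x.length) :
    ent (top2 x p q) (x.length - 1) = q := by
  rw [top2, ent_build _ (by omega) (by omega), if_neg (by omega), if_pos rfl]

theorem ent_top3_length (hr : 1 ≤ x.length) : ent (top3 x p q s) x.length = p := by
  rw [top3, ent_build _ hr le_rfl, if_pos rfl]

theorem ent_top3_length_sub_one (hr : 2 ≤ x.length) :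
    ent (top3 x p q s) (x.length - 1) = q := by
  rw [top3, ent_build _ (by omega) (by omega), if_neg (by omega), if_pos rfl]

theorem ent_top3_length_sub_two (hr : 3 ≤ x.length) :
    ent (top3 x p q s) (x.length - 2) = s := by
  rw [top3, ent_build _ (by omega) (by omega), if_neg (by omega), if_neg (by omega), if_pos rfl]

theorem swapPair_top2 (hr : 2 ≤ x.length) (hpar : x.length % 2 = 0) :
    swapPair (top2 x p q) (x.length / 2) = top2 x q p := by
  rw [swapPair, show (top2 x p q).length = x.length from length_build _ _,
    show 2 * (x.length / 2) = x.length by omega]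
  refine build_congr fun k h1 h2 => ?_
  by_cases hk1 : k = x.length
  · rw [if_neg (by omega), if_pos hk1, if_pos hk1, ent_top2_length_sub_one x p q hr]
  by_cases hk2 : k = x.length - 1
  · rw [if_pos hk2, if_neg hk1, if_pos hk2, ent_top2_length x p q (by omega)]
  rw [if_neg hk2, if_neg hk1, if_neg hk1, if_neg hk2, ent_top2_of_ne x p q hk1 hk2]

theorem ent_swapPair_two_mul (hi : 1 ≤ i) (hir : 2 * i ≤ x.length) :
    ent (swapPair x i) (2*i) = ent x (2*i-1) := by
  rw [swapPair, ent_build _ (by omega) hir, if_neg (by omega), if_pos rfl]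

theorem ent_swapPair_two_mul_sub_one (hi : 1 ≤ i) (hir : 2 * i ≤ x.length) :
    ent (swapPair x i) (2*i-1) = ent x (2*i) := by
  rw [swapPair, ent_build _ (by omega) (by omega), if_pos rfl]

theorem ent_swapPair_of_ne {k : ℕ} (h1 : k ≠ 2*i) (h2 : k ≠ 2*i-1) :
    ent (swapPair x i) k = ent x k :=
  ent_build_of_eq x fun _ _ => by rw [if_neg h2, if_neg h1]

theorem ent_arr4_two_mul_add_two (hir : 2 * i + 2 ≤ x.length) :
    ent (arr4 x i p q s t) (2*i+2) = p := by
  rw [arr4, ent_build _ (by omega) hir, if_pos rfl]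

theorem ent_arr4_two_mul_add_one (hir : 2 * i + 2 ≤ x.length) :
    ent (arr4 x i p q s t) (2*i+1) = q := by
  rw [arr4, ent_build _ (by omega) (by omega), if_neg (by omega), if_pos rfl]

theorem ent_arr4_two_mul (hi : 1 ≤ i) (hir : 2 * i + 2 ≤ x.length) :
    ent (arr4 x i p q s t) (2*i) = s := by
  rw [arr4, ent_build _ (by omega) (by omega), if_neg (by omega), if_neg (by omega), if_pos rfl]

theorem ent_arr4_two_mul_sub_one (hi : 1 ≤ i) (hir : 2 * i + 2 ≤ x.length) :
    ent (arr4 x i p q s t) (2*i-1) = t := by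
  rw [arr4, ent_build _ (by omega) (by omega), if_neg (by omega), if_neg (by omega),
    if_neg (by omega), if_pos rfl]

end Rearrangements

namespace IsSignedPerm

variable {I : Finset ℕ} {x : List ℤ}

theorem natAbs_ent_mem (hx : IsSignedPerm I x) {k : ℕ} (h1 : 1 ≤ k) (h2 : k ≤ x.length) :
    (ent x k).natAbs ∈ I :=
  hx.2.1 _ (ent_mem x h1 h2)

theorem eq_of_natAbs_ent_eq (hx : IsSignedPerm I x) {j k : ℕ} (hj1 : 1 ≤ j)
    (hj2 : j ≤ x.length) (hk1 : 1 ≤ k) (hk2 : k ≤ x.length)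
    (h : (ent x j).natAbs = (ent x k).natAbs) : j = k := by
  have hnd := hx.2.2
  have getElem_eq : ∀ i (h1 : 1 ≤ i) (h2 : i ≤ x.length),
      (ent x i).natAbs = (x.map Int.natAbs)[x.length - i]'(by simp; omega) := by
    intro i h1 h2
    unfold ent
    rw [if_pos ⟨h1, h2⟩, List.getD_eq_getElem _ _ (by omega), List.getElem_map]
  rw [getElem_eq j hj1 hj2, getElem_eq k hk1 hk2, hnd.getElem_inj_iff] at h
  omega

theorem ent_ne_zero (h0 : 0 ∉ I) (hx : IsSignedPerm I x) {k : ℕ} (h1 : 1 ≤ k)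
    (h2 : k ≤ x.length) : ent x k ≠ 0 := by
  intro hk
  exact h0 (by simpa [hk] using hx.natAbs_ent_mem h1 h2)

theorem ent_ne_of_ne (hx : IsSignedPerm I x) {j k : ℕ} (hj1 : 1 ≤ j) (hj2 : j ≤ x.length)
    (hk1 : 1 ≤ k) (hk2 : k ≤ x.length) (hjk : j ≠ k) : ent x j ≠ ent x k :=
  fun h => hjk (hx.eq_of_natAbs_ent_eq hj1 hj2 hk1 hk2 (by rw [h]))

theorem build_of_bijOn (hx : IsSignedPerm I x) (g : ℕ → ℤ) (σ : ℕ → ℕ)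
    (hσ : ∀ k, 1 ≤ k → k ≤ x.length →
      1 ≤ σ k ∧ σ k ≤ x.length ∧ (g k).natAbs = (ent x (σ k)).natAbs)
    (hσ_inj : ∀ j k, 1 ≤ j → j ≤ x.length → 1 ≤ k → k ≤ x.length → σ j = σ k → j = k) :
    IsSignedPerm I (build x.length g) := by
  refine ⟨by rw [length_build, hx.1], ?_, ?_⟩
  · intro z hz
    simp only [build, List.mem_map, List.mem_range] at hz
    obtain ⟨j, hj, rfl⟩ := hz
    obtain ⟨h1, h2, h3⟩ := hσ (x.length - j) (by omega) (by omega)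
    rw [h3]
    exact hx.natAbs_ent_mem h1 h2
  · unfold build
    rw [List.map_map]
    refine List.Nodup.map_on (fun a ha b hb hab => ?_) List.nodup_range
    rw [List.mem_range] at ha hb
    obtain ⟨ha1, ha2, ha3⟩ := hσ (x.length - a) (by omega) (by omega)
    obtain ⟨hb1, hb2, hb3⟩ := hσ (x.length - b) (by omega) (by omega)
    simp only [Function.comp, ha3, hb3] at hab
    have := hσ_inj _ _ (by omega) (by omega) (by omega) (by omega)
      (hx.eq_of_natAbs_ent_eq ha1 ha2 hb1 hb2 hab)
    omega

theorem swapPair (hx : IsSignedPerm I x) {i : ℕ} (hi : 1 ≤ i) (hir : 2 * i ≤ x.length) :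
    IsSignedPerm I (swapPair x i) := by
  refine hx.build_of_bijOn _
    (fun k => if k = 2*i-1 then 2*i else if k = 2*i then 2*i-1 else k) ?_ ?_
  · intro k h1 h2
    refine ⟨by split_ifs <;> omega, by split_ifs <;> omega, ?_⟩
    split_ifs <;> rfl
  · intro j k _ _ _ _ h
    split_ifs at h <;> omega

theorem negTop (hx : IsSignedPerm I x) :
    IsSignedPerm I (build x.length (fun k => if k = x.length then -ent x k else ent x k)) := by
  refine hx.build_of_bijOn _ id (fun k h1 h2 => ⟨h1, h2, ?_⟩) (fun _ _ _ _ _ _ h => h)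
  split_ifs <;> simp

theorem top2 (hx : IsSignedPerm I x) {p q : ℤ} (π₁ π₂ : ℕ) (hr : 2 ≤ x.length)
    (hπ : π₁ = x.length ∧ π₂ = x.length - 1 ∨ π₁ = x.length - 1 ∧ π₂ = x.length)
    (hp : p.natAbs = (ent x π₁).natAbs) (hq : q.natAbs = (ent x π₂).natAbs) :
    IsSignedPerm I (top2 x p q) := by
  refine hx.build_of_bijOn _
    (fun k => if k = x.length then π₁ else if k = x.length - 1 then π₂ else k) ?_ ?_
  · intro k h1 h2
    refine ⟨by split_ifs <;> omega, by split_ifs <;> omega, ?_⟩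
    split_ifs
    exacts [hp, hq, rfl]
  · intro j k _ _ _ _ h
    split_ifs at h <;> omega

theorem top3 (hx : IsSignedPerm I x) {p q s : ℤ} (π₁ π₂ π₃ : ℕ) (hr : 3 ≤ x.length)
    (hπ : x.length - 2 ≤ π₁ ∧ π₁ ≤ x.length ∧ x.length - 2 ≤ π₂ ∧ π₂ ≤ x.length ∧
      x.length - 2 ≤ π₃ ∧ π₃ ≤ x.length ∧ π₁ ≠ π₂ ∧ π₁ ≠ π₃ ∧ π₂ ≠ π₃)
    (hp : p.natAbs = (ent x π₁).natAbs) (hq : q.natAbs = (ent x π₂).natAbs)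
    (hs : s.natAbs = (ent x π₃).natAbs) :
    IsSignedPerm I (top3 x p q s) := by
  refine hx.build_of_bijOn _ (fun k => if k = x.length then π₁ else if k = x.length - 1 then π₂
    else if k = x.length - 2 then π₃ else k) ?_ ?_
  · intro k h1 h2
    refine ⟨by split_ifs <;> omega, by split_ifs <;> omega, ?_⟩
    split_ifs
    exacts [hp, hq, hs, rfl]
  · intro j k _ _ _ _ h
    split_ifs at h <;> omega

theorem arr4 (hx : IsSignedPerm I x) {i : ℕ} {p q s t : ℤ} (π₁ π₂ π₃ π₄ : ℕ) (hi : 1 ≤ i)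
    (hir : 2 * i + 2 ≤ x.length)
    (hπ : 2*i-1 ≤ π₁ ∧ π₁ ≤ 2*i+2 ∧ 2*i-1 ≤ π₂ ∧ π₂ ≤ 2*i+2 ∧ 2*i-1 ≤ π₃ ∧ π₃ ≤ 2*i+2 ∧
      2*i-1 ≤ π₄ ∧ π₄ ≤ 2*i+2 ∧
      π₁ ≠ π₂ ∧ π₁ ≠ π₃ ∧ π₁ ≠ π₄ ∧ π₂ ≠ π₃ ∧ π₂ ≠ π₄ ∧ π₃ ≠ π₄)
    (hp : p = ent x π₁) (hq : q = ent x π₂) (hs : s = ent x π₃) (ht : t = ent x π₄) :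
    IsSignedPerm I (arr4 x i p q s t) := by
  refine hx.build_of_bijOn _ (fun k => if k = 2*i+2 then π₁ else if k = 2*i+1 then π₂
    else if k = 2*i then π₃ else if k = 2*i-1 then π₄ else k) ?_ ?_
  · intro k h1 h2
    refine ⟨by split_ifs <;> omega, by split_ifs <;> omega, ?_⟩
    split_ifs <;> simp only [hp, hq, hs, ht]
  · intro j k _ _ _ _ h
    split_ifs at h <;> omega

end IsSignedPerm

section Relations

variable {I : Finset ℕ} {x : List ℤ}

theorem H1_mem_Mrel (hx : IsSignedPerm I x) {i : ℕ} (h1 : 1 ≤ i) (h2 : i ≤ I.card / 2) :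
    H1 x i ∈ Mrel I :=
  Submodule.subset_span (Or.inl (Or.inl (Or.inl (Or.inl ⟨x, i, hx, h1, h2, rfl⟩))))

theorem H2_mem_Mrel (hx : IsSignedPerm I x) {i : ℕ} (h1 : 1 ≤ i) (h2 : i + 1 ≤ I.card / 2) :
    H2 x i ∈ Mrel I :=
  Submodule.subset_span (Or.inl (Or.inl (Or.inl (Or.inr ⟨x, i, hx, h1, h2, rfl⟩))))

theorem H3_mem_Mrel (hx : IsSignedPerm I x) (h : I.card % 2 = 1) : H3 x ∈ Mrel I :=
  Submodule.subset_span (Or.inl (Or.inl (Or.inr ⟨x, hx, h, rfl⟩)))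

theorem H4_mem_Mrel (hx : IsSignedPerm I x) (h : I.card % 2 = 0) : H4 x ∈ Mrel I :=
  Submodule.subset_span (Or.inl (Or.inr ⟨x, hx, h, rfl⟩))

theorem H5_mem_Mrel (hx : IsSignedPerm I x) (h1 : I.card % 2 = 1) (h2 : 3 ≤ I.card) :
    H5 x ∈ Mrel I :=
  Submodule.subset_span (Or.inr ⟨x, hx, h1, h2, rfl⟩)

end Relations

section Measure

open Finset

def blockWeight (r i : ℕ) : ℤ :=
  if r % 2 = 1 then ((r / 2 : ℕ) : ℤ) - i else (i : ℤ) - ((r / 2 : ℕ) : ℤ)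

def blockSum (l : List ℤ) (i : ℕ) : ℤ := ent l (2*i) + ent l (2*i-1)

def blockPotential (l : List ℤ) : ℤ :=
  ∑ i ∈ Icc 1 (l.length / 2), blockWeight l.length i * blockSum l i

/-- Block `i` is ordered against the pattern `0 < x_r > x_{r-1} < x_{r-2} > ⋯` of a `B`-snake. -/
def IsBlockDefect (l : List ℤ) (i : ℕ) : Prop :=
  if l.length % 2 = 1 then ent l (2*i-1) < ent l (2*i) else ent l (2*i) < ent l (2*i-1)

def IsBoundaryDefect (l : List ℤ) (i : ℕ) : Prop :=
  if l.length % 2 = 1 then ent l (2*i+1) < ent l (2*i) else ent l (2*i) < ent l (2*i+1)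

instance (l : List ℤ) : DecidablePred (IsBlockDefect l) := fun _ => by
  unfold IsBlockDefect; infer_instance

def blockDefectCount (l : List ℤ) : ℕ :=
  #{i ∈ Icc 1 (l.length / 2 - 1) | IsBlockDefect l i}

/-- The weights are chosen so that each of `ℋ₁` (on the top block), `ℋ₃`, `ℋ₄`, `ℋ₅` lowers it. -/
def topDefect (l : List ℤ) : ℕ :=
  if l.length % 2 = 1 then
    (if ent l (l.length - 2) < ent l (l.length - 1) then 2 else 0)
    + (if ent l l.length < 0 then 2 else 0)
    + (if 0 < ent l l.length ∧ ent l (l.length - 1) < ent l (l.length - 2)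
          ∧ ent l l.length < ent l (l.length - 1) then 1 else 0)
  else
    (if ent l l.length < ent l (l.length - 1) then 2 else 0)
    + (if ent l (l.length - 1) < ent l l.length ∧ ent l l.length < 0 then 1 else 0)

/-- The shift makes the block potential nonnegative on signed permutations of `I`
(`neg_le_blockPotential`), so `toNat` loses nothing there. -/
def straighteningMeasure (I : Finset ℕ) (l : List ℤ) : ℕ ×ₗ ℕ ×ₗ ℕ :=
  toLex ((blockPotential l + 2 * (I.sup id : ℕ) * l.length * l.length).toNat,
    toLex (topDefect l, blockDefectCount l))

theorem blockWeight_half (r : ℕ) : blockWeight r (r / 2) = 0 := by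
  unfold blockWeight; split_ifs <;> ring

theorem blockWeight_sub_succ (r i : ℕ) :
    blockWeight r i - blockWeight r (i + 1) = if r % 2 = 1 then 1 else -1 := by
  unfold blockWeight; split_ifs <;> push_cast <;> ring

theorem neg_le_blockPotential {l : List ℤ} {M : ℕ} (hM : ∀ z ∈ l, z.natAbs ≤ M) :
    -(2 * M * l.length * l.length : ℤ) ≤ blockPotential l := by
  have hent : ∀ k, |ent l k| ≤ M := by
    intro k
    by_cases hk : 1 ≤ k ∧ k ≤ l.length
    · rw [Int.abs_eq_natAbs]
      exact_mod_cast hM _ (ent_mem l hk.1 hk.2)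
    · rw [ent_eq_zero (by omega)]
      simp
  have hterm : ∀ i ∈ Icc 1 (l.length / 2),
      -(l.length * (2 * M) : ℤ) ≤ blockWeight l.length i * blockSum l i := by
    intro i hi
    rw [mem_Icc] at hi
    have hw : |blockWeight l.length i| ≤ l.length := by
      unfold blockWeight; split_ifs <;> rw [abs_le] <;> constructor <;> push_cast <;> omega
    have hs : |blockSum l i| ≤ 2 * M := by
      have := hent (2*i)
      have := hent (2*i-1)
      unfold blockSum
      rw [abs_le] at *
      constructor <;> linarith
    have := mul_le_mul hw hs (abs_nonneg _) (by positivity)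
    rw [← abs_mul] at this
    linarith [neg_abs_le (blockWeight l.length i * blockSum l i)]
  calc -(2 * M * l.length * l.length : ℤ)
      ≤ ∑ _i ∈ Icc 1 (l.length / 2), -(l.length * (2 * M) : ℤ) := by
        rw [sum_const, Nat.card_Icc, nsmul_eq_mul]
        have : ((l.length / 2 + 1 - 1 : ℕ) : ℤ) ≤ l.length := by push_cast; omega
        nlinarith [show (0 : ℤ) ≤ l.length * (2 * M) by positivity]
    _ ≤ blockPotential l := sum_le_sum hterm

variable {I : Finset ℕ} {x y : List ℤ}

theorem straighteningMeasure_lt_of_blockPotential_lt (hy : IsSignedPerm I y)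
    (hlen : y.length = x.length) (h : blockPotential y < blockPotential x) :
    straighteningMeasure I y < straighteningMeasure I x := by
  have hbound := neg_le_blockPotential (M := I.sup id) fun z hz =>
    Finset.le_sup (f := id) (hy.2.1 z hz)
  refine Prod.Lex.toLex_lt_toLex.mpr (Or.inl ?_)
  simp only [hlen] at hbound ⊢
  omega

theorem straighteningMeasure_lt_of_topDefect_lt (hlen : y.length = x.length)
    (hV : blockPotential y = blockPotential x) (hT : topDefect y < topDefect x) :
    straighteningMeasure I y < straighteningMeasure I x :=
  Prod.Lex.toLex_lt_toLex.mpr (Or.inr ⟨by simp only [hlen, hV],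
    Prod.Lex.toLex_lt_toLex.mpr (Or.inl hT)⟩)

theorem straighteningMeasure_lt_of_blockDefectCount_lt (hlen : y.length = x.length)
    (hV : blockPotential y = blockPotential x) (hT : topDefect y = topDefect x)
    (hD : blockDefectCount y < blockDefectCount x) :
    straighteningMeasure I y < straighteningMeasure I x :=
  Prod.Lex.toLex_lt_toLex.mpr (Or.inr ⟨by simp only [hlen, hV],
    Prod.Lex.toLex_lt_toLex.mpr (Or.inr ⟨hT, hD⟩)⟩)

theorem blockPotential_eq_of_blockSum_eq (hlen : y.length = x.length)
    (h : ∀ i, 1 ≤ i → i < x.length / 2 → blockSum y i = blockSum x i) :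
    blockPotential y = blockPotential x := by
  unfold blockPotential
  rw [hlen]
  refine sum_congr rfl fun i hi => ?_
  rw [mem_Icc] at hi
  rcases hi.2.lt_or_eq with hlt | rfl
  · rw [h i hi.1 hlt]
  · rw [blockWeight_half, zero_mul, zero_mul]

theorem straighteningMeasure_lt_of_top_change (hlen : y.length = x.length)
    (h : ∀ k, 1 ≤ k → k ≤ 2 * (x.length / 2 - 1) → ent y k = ent x k)
    (hT : topDefect y < topDefect x) :
    straighteningMeasure I y < straighteningMeasure I x := by
  refine straighteningMeasure_lt_of_topDefect_lt hlen ?_ hT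
  refine blockPotential_eq_of_blockSum_eq hlen fun i h1 h2 => ?_
  unfold blockSum
  rw [h (2*i) (by omega) (by omega), h (2*i-1) (by omega) (by omega)]

theorem blockDefectCount_lt {x y : List ℤ} {i : ℕ} (hlen : y.length = x.length) (hi1 : 1 ≤ i)
    (hi2 : i ≤ x.length / 2 - 1)
    (h : ∀ k, 1 ≤ k → k ≤ 2 * (x.length / 2 - 1) → k ≠ 2*i → k ≠ 2*i-1 → ent y k = ent x k)
    (hx : IsBlockDefect x i) (hy : ¬ IsBlockDefect y i) :
    blockDefectCount y < blockDefectCount x := by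
  unfold blockDefectCount
  rw [hlen]
  refine Finset.card_lt_card ⟨fun j hj => ?_, fun hsub => hy ?_⟩
  · rw [Finset.mem_filter, Finset.mem_Icc] at hj ⊢
    refine ⟨hj.1, ?_⟩
    obtain rfl | hne := eq_or_ne j i
    · exact absurd hj.2 hy
    · have hdef := hj.2
      unfold IsBlockDefect at hdef ⊢
      rwa [hlen, h (2*j) (by omega) (by omega) (by omega) (by omega),
        h (2*j-1) (by omega) (by omega) (by omega) (by omega)] at hdef
  · have hmem := hsub (Finset.mem_filter.mpr ⟨Finset.mem_Icc.mpr ⟨hi1, hi2⟩, hx⟩)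
    exact (Finset.mem_filter.mp hmem).2

theorem blockPotential_arr4_sub (x : List ℤ) {i : ℕ} {p q s t : ℤ} (hi : 1 ≤ i)
    (hir : 2 * i + 2 ≤ x.length)
    (hsum : p + q + s + t = ent x (2*i+2) + ent x (2*i+1) + ent x (2*i) + ent x (2*i-1)) :
    blockPotential (arr4 x i p q s t) - blockPotential x =
      (blockWeight x.length i - blockWeight x.length (i + 1)) *
        (s + t - (ent x (2*i) + ent x (2*i-1))) := by
  have hlen : (arr4 x i p q s t).length = x.length := length_build _ _
  unfold blockPotential
  rw [hlen, ← Finset.sum_sub_distrib, Finset.sum_eq_add_of_mem i (i + 1)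
    (Finset.mem_Icc.mpr ⟨hi, by omega⟩) (Finset.mem_Icc.mpr ⟨by omega, by omega⟩) (by omega)]
  · unfold blockSum
    rw [show 2 * (i + 1) = 2*i+2 by ring, show 2 * i + 2 - 1 = 2*i+1 by omega,
      ent_arr4_two_mul_add_two x p q s t hir, ent_arr4_two_mul_add_one x p q s t hir,
      ent_arr4_two_mul x p q s t hi hir, ent_arr4_two_mul_sub_one x p q s t hi hir]
    linear_combination blockWeight x.length (i + 1) * hsum
  · intro j hj hne
    rw [Finset.mem_Icc] at hj
    unfold blockSum
    rw [ent_arr4_of_ne x p q s t (by omega) (by omega) (by omega) (by omega),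
      ent_arr4_of_ne x p q s t (by omega) (by omega) (by omega) (by omega), sub_self]

end Measure

noncomputable def snakeSpan (I : Finset ℕ) : Submodule ℚ FreeV :=
  Submodule.span ℚ {v | ∃ y, IsBSnake I y ∧ v = sv y}

def StraightenedBelow (I : Finset ℕ) (x : List ℤ) : Prop :=
  ∀ y, IsSignedPerm I y → straighteningMeasure I y < straighteningMeasure I x →
    sv y ∈ snakeSpan I ⊔ Mrel I

section Straightening

variable {I : Finset ℕ} {x : List ℤ} {i : ℕ}

theorem topDefect_swapPair_half_lt (hr2 : 2 ≤ x.length) (hdef : IsBlockDefect x (x.length / 2)) :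
    topDefect (swapPair x (x.length / 2)) < topDefect x := by
  set r := x.length with hr
  have e1 := ent_swapPair_two_mul x (i := r / 2) (by omega) (by omega)
  have e2 := ent_swapPair_two_mul_sub_one x (i := r / 2) (by omega) (by omega)
  unfold IsBlockDefect at hdef
  unfold topDefect
  rw [show (swapPair x (r / 2)).length = r from length_build _ _]
  rcases Nat.mod_two_eq_zero_or_one r with hp | hp
  · rw [show 2 * (r / 2) = r by omega] at e1 e2 hdef
    rw [if_neg (by omega)] at hdef
    rw [if_neg (by omega), if_neg (by omega), e1, e2]
    split_ifs <;> omega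
  · rw [show 2 * (r / 2) = r - 1 by omega, show r - 1 - 1 = r - 2 by omega] at e1 e2 hdef
    rw [if_pos hp] at hdef
    rw [if_pos hp, if_pos hp, e1, e2, ent_swapPair_of_ne x (by omega) (by omega)]
    split_ifs <;> omega

theorem straighteningMeasure_swapPair_lt (hi1 : 1 ≤ i) (hi2 : i ≤ x.length / 2)
    (hdef : IsBlockDefect x i) :
    straighteningMeasure I (swapPair x i) < straighteningMeasure I x := by
  set r := x.length with hr
  have hlen : (swapPair x i).length = r := length_build _ _
  obtain rfl | hlow := eq_or_ne i (r / 2)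
  · exact straighteningMeasure_lt_of_top_change hlen
      (fun k _ _ => ent_swapPair_of_ne x (by omega) (by omega))
      (topDefect_swapPair_half_lt (by omega) hdef)
  have e1 := ent_swapPair_two_mul x hi1 (by omega)
  have e2 := ent_swapPair_two_mul_sub_one x hi1 (by omega)
  have hD : blockDefectCount (swapPair x i) < blockDefectCount x := by
    refine blockDefectCount_lt hlen hi1 (by omega)
      (fun k _ _ h1 h2 => ent_swapPair_of_ne x h1 h2) hdef ?_
    unfold IsBlockDefect at hdef ⊢
    rw [hlen, e1, e2]
    split_ifs at hdef ⊢ <;> omega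
  have hT : topDefect (swapPair x i) = topDefect x := by
    have o1 := ent_swapPair_of_ne x (i := i) (k := r) (by omega) (by omega)
    have o2 := ent_swapPair_of_ne x (i := i) (k := r - 1) (by omega) (by omega)
    unfold topDefect
    rw [hlen, o1, o2]
    by_cases hp : r % 2 = 1
    · rw [if_pos hp, if_pos hp, ent_swapPair_of_ne x (k := r - 2) (by omega) (by omega)]
    · rw [if_neg hp, if_neg hp]
  refine straighteningMeasure_lt_of_blockDefectCount_lt hlen ?_ hT hD
  refine blockPotential_eq_of_blockSum_eq hlen fun j _ _ => ?_
  unfold blockSum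
  obtain rfl | hne := eq_or_ne j i
  · rw [e1, e2, add_comm]
  · rw [ent_swapPair_of_ne x (by omega) (by omega), ent_swapPair_of_ne x (by omega) (by omega)]

theorem sv_mem_of_isBlockDefect (hx : IsSignedPerm I x) (hi1 : 1 ≤ i)
    (hi2 : i ≤ x.length / 2) (hdef : IsBlockDefect x i) (IH : StraightenedBelow I x) :
    sv x ∈ snakeSpan I ⊔ Mrel I := by
  have hrel := H1_mem_Mrel hx hi1 (hx.1 ▸ hi2)
  have hy := IH _ (hx.swapPair hi1 (by omega)) (straighteningMeasure_swapPair_lt hi1 hi2 hdef)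
  rw [show sv x = H1 x i - sv (swapPair x i) by rw [H1]; abel]
  exact sub_mem (Submodule.mem_sup_right hrel) hy

theorem sv_mem_of_odd_of_top_neg (hx : IsSignedPerm I x) (hpar : x.length % 2 = 1)
    (hneg : ent x x.length < 0) (IH : StraightenedBelow I x) :
    sv x ∈ snakeSpan I ⊔ Mrel I := by
  set r := x.length with hr
  set y := build r (fun k => if k = r then -ent x k else ent x k)
  have hlen : y.length = r := length_build _ _
  have hother : ∀ k, k ≠ r → ent y k = ent x k := fun k hk =>
    ent_build_of_eq x fun _ _ => if_neg hk
  have hlt : straighteningMeasure I y < straighteningMeasure I x := by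
    refine straighteningMeasure_lt_of_top_change hlen (fun k _ _ => hother k (by omega)) ?_
    unfold topDefect
    rw [hlen, if_pos hpar, if_pos hpar, hother _ (by omega), hother _ (by omega),
      ent_build _ (by omega) le_rfl, if_pos rfl]
    split_ifs <;> omega
  have hrel := H3_mem_Mrel hx (hx.1 ▸ hpar)
  rw [show sv x = H3 x - sv y by rw [H3]; abel]
  exact sub_mem (Submodule.mem_sup_right hrel) (IH _ hx.negTop hlt)

theorem straighteningMeasure_top2_lt (hpar : x.length % 2 = 0) (hr : 2 ≤ x.length) {p q : ℤ}
    (h1 : ¬ p < q) (h2 : ¬ (q < p ∧ p < 0))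
    (hx : ent x (x.length - 1) < ent x x.length ∧ ent x x.length < 0) :
    straighteningMeasure I (top2 x p q) < straighteningMeasure I x := by
  have hlen : (top2 x p q).length = x.length := length_build _ _
  refine straighteningMeasure_lt_of_top_change hlen
    (fun k _ _ => ent_top2_of_ne x p q (by omega) (by omega)) ?_
  have hodd : ¬ x.length % 2 = 1 := by omega
  unfold topDefect
  rw [hlen, if_neg hodd, if_neg hodd, ent_top2_length x p q (by omega),
    ent_top2_length_sub_one x p q hr]
  split_ifs <;> omega

theorem sv_mem_of_even_of_top_neg (hx : IsSignedPerm I x) (hpar : x.length % 2 = 0)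
    (hneg : ent x x.length < 0) (hlt : ent x (x.length - 1) < ent x x.length)
    (IH : StraightenedBelow I x) :
    sv x ∈ snakeSpan I ⊔ Mrel I := by
  set r := x.length with hr
  have hr2 : 2 ≤ r := by
    by_contra h
    rw [ent_eq_zero (by omega)] at hneg
    omega
  set A := ent x r
  set B := ent x (r - 1)
  have term : ∀ p q π₁ π₂, π₁ = r ∧ π₂ = r - 1 ∨ π₁ = r - 1 ∧ π₂ = r →
      p.natAbs = (ent x π₁).natAbs → q.natAbs = (ent x π₂).natAbs →
      ¬ p < q → ¬ (q < p ∧ p < 0) → sv (top2 x p q) ∈ snakeSpan I ⊔ Mrel I :=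
    fun p q π₁ π₂ hπ hp hq h1 h2 => IH _ (hx.top2 π₁ π₂ hr2 hπ hp hq)
      (straighteningMeasure_top2_lt hpar hr2 h1 h2 ⟨hlt, hneg⟩)
  -- `ℋ₄` expresses `x` through `[A, -B]`, `[B, -A]`, `[-B, -A]`; the first two still have
  -- a defect in their top block, removed by `ℋ₁`.
  have hH4 : H4 x = sv x - sv (top2 x A (-B)) + sv (top2 x B (-A)) - sv (top2 x (-B) (-A)) := by
    rw [H4, top2_self]
  have hH1 : ∀ p q, H1 (top2 x p q) (r / 2) = sv (top2 x p q) + sv (top2 x q p) := by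
    intro p q
    unfold H1
    congr 2
    exact swapPair_top2 x p q hr2 hpar
  have hrel : H4 x + H1 (top2 x A (-B)) (r / 2) - H1 (top2 x B (-A)) (r / 2) ∈ Mrel I := by
    have hhalf : 1 ≤ r / 2 ∧ r / 2 ≤ I.card / 2 := ⟨by omega, by rw [← hx.1]⟩
    refine sub_mem (add_mem (H4_mem_Mrel hx (hx.1 ▸ hpar)) (H1_mem_Mrel ?_ hhalf.1 hhalf.2))
      (H1_mem_Mrel ?_ hhalf.1 hhalf.2)
    · exact hx.top2 r (r - 1) hr2 (Or.inl ⟨rfl, rfl⟩) rfl (Int.natAbs_neg _)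
    · exact hx.top2 (r - 1) r hr2 (Or.inr ⟨rfl, rfl⟩) rfl (Int.natAbs_neg _)
  have w1 := term (-B) A (r - 1) r (Or.inr ⟨rfl, rfl⟩) (Int.natAbs_neg _) rfl (by omega) (by omega)
  have w2 := term (-A) B r (r - 1) (Or.inl ⟨rfl, rfl⟩) (Int.natAbs_neg _) rfl (by omega) (by omega)
  have w3 := term (-B) (-A) (r - 1) r (Or.inr ⟨rfl, rfl⟩) (Int.natAbs_neg _) (Int.natAbs_neg _)
    (by omega) (by omega)
  rw [show sv x = (H4 x + H1 (top2 x A (-B)) (r / 2) - H1 (top2 x B (-A)) (r / 2))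
      - sv (top2 x (-B) A) + sv (top2 x (-A) B) + sv (top2 x (-B) (-A)) by
    rw [hH4, hH1, hH1]; abel]
  exact add_mem (add_mem (sub_mem (Submodule.mem_sup_right hrel) w1) w2) w3

theorem straighteningMeasure_top3_lt (hpar : x.length % 2 = 1) (hr : 3 ≤ x.length) {p q s : ℤ}
    (h1 : ¬ s < q) (h2 : ¬ p < 0) (h3 : ¬ (0 < p ∧ q < s ∧ p < q))
    (hx : 0 < ent x x.length ∧ ent x x.length < ent x (x.length - 1) ∧
      ent x (x.length - 1) < ent x (x.length - 2)) :
    straighteningMeasure I (top3 x p q s) < straighteningMeasure I x := by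
  have hlen : (top3 x p q s).length = x.length := length_build _ _
  refine straighteningMeasure_lt_of_top_change hlen
    (fun k _ _ => ent_top3_of_ne x p q s (by omega) (by omega) (by omega)) ?_
  unfold topDefect
  rw [hlen, if_pos hpar, if_pos hpar, ent_top3_length x p q s (by omega),
    ent_top3_length_sub_one x p q s (by omega), ent_top3_length_sub_two x p q s hr]
  split_ifs <;> omega

theorem sv_mem_of_odd_of_top_ascent (hx : IsSignedPerm I x) (hpar : x.length % 2 = 1)
    (hpos : 0 < ent x x.length) (hAB : ent x x.length < ent x (x.length - 1))
    (hBC : ent x (x.length - 1) < ent x (x.length - 2)) (IH : StraightenedBelow I x) :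
    sv x ∈ snakeSpan I ⊔ Mrel I := by
  set r := x.length with hr
  have hr3 : 3 ≤ r := by
    by_contra h
    rw [ent_eq_zero (l := x) (k := r - 1) (by omega)] at hAB
    omega
  set A := ent x r with hA
  set B := ent x (r - 1) with hB
  set C := ent x (r - 2) with hC
  have term : ∀ p q s π₁ π₂ π₃, r - 2 ≤ π₁ ∧ π₁ ≤ r ∧ r - 2 ≤ π₂ ∧ π₂ ≤ r ∧
      r - 2 ≤ π₃ ∧ π₃ ≤ r ∧ π₁ ≠ π₂ ∧ π₁ ≠ π₃ ∧ π₂ ≠ π₃ →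
      p.natAbs = (ent x π₁).natAbs → q.natAbs = (ent x π₂).natAbs →
      s.natAbs = (ent x π₃).natAbs → ¬ s < q ∧ ¬ p < 0 ∧ ¬ (0 < p ∧ q < s ∧ p < q) →
      sv (top3 x p q s) ∈ snakeSpan I ⊔ Mrel I :=
    fun p q s π₁ π₂ π₃ hπ hp hq hs ⟨h1, h2, h3⟩ => IH _ (hx.top3 π₁ π₂ π₃ hr3 hπ hp hq hs)
      (straighteningMeasure_top3_lt hpar hr3 h1 h2 h3 ⟨hpos, hAB, hBC⟩)
  have neg := Int.natAbs_neg
  have w1 := term A (-B) C r (r - 1) (r - 2) (by omega) rfl (neg _) rfl (by omega)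
  have w2 := term A (-C) B r (r - 2) (r - 1) (by omega) rfl (neg _) rfl (by omega)
  have w3 := term A (-C) (-B) r (r - 2) (r - 1) (by omega) rfl (neg _) (neg _) (by omega)
  have w4 := term B A C (r - 1) r (r - 2) (by omega) rfl rfl rfl (by omega)
  have w5 := term B (-A) C (r - 1) r (r - 2) (by omega) rfl (neg _) rfl (by omega)
  have w6 := term B (-C) A (r - 1) (r - 2) r (by omega) rfl (neg _) rfl (by omega)
  have w7 := term B (-C) (-A) (r - 1) (r - 2) r (by omega) rfl (neg _) (neg _) (by omega)
  have w8 := term C A B (r - 2) r (r - 1) (by omega) rfl rfl rfl (by omega)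
  have w9 := term C (-A) B (r - 2) r (r - 1) (by omega) rfl (neg _) rfl (by omega)
  have w10 := term C (-B) A (r - 2) (r - 1) r (by omega) rfl (neg _) rfl (by omega)
  have w11 := term C (-B) (-A) (r - 2) (r - 1) r (by omega) rfl (neg _) (neg _) (by omega)
  have hrel : H5 x ∈ snakeSpan I ⊔ Mrel I :=
    Submodule.mem_sup_right (H5_mem_Mrel hx (hx.1 ▸ hpar) (hx.1 ▸ hr3))
  rw [show sv x = H5 x + sv (top3 x A (-B) C) - sv (top3 x A (-C) B)
      + sv (top3 x A (-C) (-B)) + sv (top3 x B A C) - sv (top3 x B (-A) C)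
      + sv (top3 x B (-C) A) - sv (top3 x B (-C) (-A)) - sv (top3 x C A B)
      + sv (top3 x C (-A) B) - sv (top3 x C (-B) A) + sv (top3 x C (-B) (-A)) by
    rw [H5, top3_self]; abel]
  exact add_mem (sub_mem (add_mem (sub_mem (sub_mem (add_mem (sub_mem (add_mem (add_mem
    (sub_mem (add_mem hrel w1) w2) w3) w4) w5) w6) w7) w8) w9) w10) w11

theorem straighteningMeasure_arr4_lt {p q s t : ℤ} (hy : IsSignedPerm I (arr4 x i p q s t))
    (hi : 1 ≤ i) (hir : 2 * i + 2 ≤ x.length)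
    (hsum : p + q + s + t = ent x (2*i+2) + ent x (2*i+1) + ent x (2*i) + ent x (2*i-1))
    (hlt : if x.length % 2 = 1 then s + t < ent x (2*i) + ent x (2*i-1)
      else ent x (2*i) + ent x (2*i-1) < s + t) :
    straighteningMeasure I (arr4 x i p q s t) < straighteningMeasure I x := by
  refine straighteningMeasure_lt_of_blockPotential_lt hy (length_build _ _) ?_
  have hsub := blockPotential_arr4_sub x hi hir hsum
  rw [blockWeight_sub_succ] at hsub
  split_ifs at hsub hlt <;> linarith

theorem ent_chain_of_isBoundaryDefect (hx : IsSignedPerm I x) (hi1 : 1 ≤ i)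
    (hi2 : i + 1 ≤ x.length / 2) (hd1 : ¬ IsBlockDefect x i) (hd2 : ¬ IsBlockDefect x (i + 1))
    (hb : IsBoundaryDefect x i) :
    if x.length % 2 = 1 then
      ent x (2*i+2) < ent x (2*i+1) ∧ ent x (2*i+1) < ent x (2*i) ∧ ent x (2*i) < ent x (2*i-1)
    else
      ent x (2*i-1) < ent x (2*i) ∧ ent x (2*i) < ent x (2*i+1) ∧
        ent x (2*i+1) < ent x (2*i+2) := by
  have hab := hx.ent_ne_of_ne (j := 2*i+2) (k := 2*i+1) (by omega) (by omega) (by omega)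
    (by omega) (by omega)
  have hcd := hx.ent_ne_of_ne (j := 2*i) (k := 2*i-1) (by omega) (by omega) (by omega)
    (by omega) (by omega)
  unfold IsBlockDefect at hd1 hd2
  unfold IsBoundaryDefect at hb
  rw [show 2 * (i + 1) = 2*i+2 by ring, show 2 * i + 2 - 1 = 2*i+1 by omega] at hd2
  split_ifs at hd1 hd2 hb ⊢ <;> omega

theorem sv_mem_of_isBoundaryDefect (hx : IsSignedPerm I x) (hi1 : 1 ≤ i)
    (hi2 : i + 1 ≤ x.length / 2) (hd1 : ¬ IsBlockDefect x i) (hd2 : ¬ IsBlockDefect x (i + 1))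
    (hb : IsBoundaryDefect x i) (IH : StraightenedBelow I x) :
    sv x ∈ snakeSpan I ⊔ Mrel I := by
  have hir : 2 * i + 2 ≤ x.length := by omega
  have horder := ent_chain_of_isBoundaryDefect hx hi1 hi2 hd1 hd2 hb
  have term : ∀ π₁ π₂ π₃ π₄, 2*i-1 ≤ π₁ ∧ π₁ ≤ 2*i+2 ∧ 2*i-1 ≤ π₂ ∧ π₂ ≤ 2*i+2 ∧
      2*i-1 ≤ π₃ ∧ π₃ ≤ 2*i+2 ∧ 2*i-1 ≤ π₄ ∧ π₄ ≤ 2*i+2 ∧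
      π₁ ≠ π₂ ∧ π₁ ≠ π₃ ∧ π₁ ≠ π₄ ∧ π₂ ≠ π₃ ∧ π₂ ≠ π₄ ∧ π₃ ≠ π₄ →
      ent x π₁ + ent x π₂ + ent x π₃ + ent x π₄ =
        ent x (2*i+2) + ent x (2*i+1) + ent x (2*i) + ent x (2*i-1) →
      (if x.length % 2 = 1 then ent x π₃ + ent x π₄ < ent x (2*i) + ent x (2*i-1)
        else ent x (2*i) + ent x (2*i-1) < ent x π₃ + ent x π₄) →
      sv (arr4 x i (ent x π₁) (ent x π₂) (ent x π₃) (ent x π₄)) ∈ snakeSpan I ⊔ Mrel I :=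
    fun π₁ π₂ π₃ π₄ hπ hsum hlt =>
      IH _ (hx.arr4 π₁ π₂ π₃ π₄ hi1 hir hπ rfl rfl rfl rfl)
        (straighteningMeasure_arr4_lt (hx.arr4 π₁ π₂ π₃ π₄ hi1 hir hπ rfl rfl rfl rfl)
          hi1 hir hsum hlt)
  have w1 := term (2*i+2) (2*i) (2*i+1) (2*i-1) (by omega) (by ring)
    (by split_ifs at horder ⊢ <;> omega)
  have w2 := term (2*i+1) (2*i) (2*i+2) (2*i-1) (by omega) (by ring)
    (by split_ifs at horder ⊢ <;> omega)
  have w3 := term (2*i+2) (2*i-1) (2*i+1) (2*i) (by omega) (by ring)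
    (by split_ifs at horder ⊢ <;> omega)
  have w4 := term (2*i+1) (2*i-1) (2*i+2) (2*i) (by omega) (by ring)
    (by split_ifs at horder ⊢ <;> omega)
  have w5 := term (2*i) (2*i-1) (2*i+2) (2*i+1) (by omega) (by ring)
    (by split_ifs at horder ⊢ <;> omega)
  have hrel : H2 x i ∈ snakeSpan I ⊔ Mrel I :=
    Submodule.mem_sup_right (H2_mem_Mrel hx hi1 (hx.1 ▸ hi2))
  rw [show sv x = H2 x i
      + sv (arr4 x i (ent x (2*i+2)) (ent x (2*i)) (ent x (2*i+1)) (ent x (2*i-1)))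
      - sv (arr4 x i (ent x (2*i+1)) (ent x (2*i)) (ent x (2*i+2)) (ent x (2*i-1)))
      - sv (arr4 x i (ent x (2*i+2)) (ent x (2*i-1)) (ent x (2*i+1)) (ent x (2*i)))
      + sv (arr4 x i (ent x (2*i+1)) (ent x (2*i-1)) (ent x (2*i+2)) (ent x (2*i)))
      - sv (arr4 x i (ent x (2*i)) (ent x (2*i-1)) (ent x (2*i+2)) (ent x (2*i+1))) by
    rw [H2, arr4_self]; abel]
  exact sub_mem (add_mem (sub_mem (sub_mem (add_mem hrel w1) w2) w3) w4) w5

theorem isBSnake_of_forall_not_defect (h0 : 0 ∉ I) (hx : IsSignedPerm I x)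
    (hblock : ∀ j, 1 ≤ j → j ≤ x.length / 2 → ¬ IsBlockDefect x j)
    (hbound : ∀ i, 1 ≤ i → i + 1 ≤ x.length / 2 → ¬ IsBoundaryDefect x i)
    (hnonneg : ¬ ent x x.length < 0)
    (htop : x.length % 2 = 1 → ¬ ent x x.length < ent x (x.length - 1)) :
    IsBSnake I x := by
  refine ⟨hx, fun h => lt_of_le_of_ne (not_lt.mp hnonneg)
    (hx.ent_ne_zero h0 (by omega) le_rfl).symm, fun k hk1 hk2 => ?_⟩
  have hne := hx.ent_ne_of_ne (j := k) (k := k + 1) hk1 (by omega) (by omega) hk2 (by omega)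
  obtain ⟨j, rfl | rfl⟩ : ∃ j, k = 2 * j ∨ k = 2 * j + 1 := ⟨k / 2, by omega⟩
  · by_cases hj : j + 1 ≤ x.length / 2
    · have := hbound j (by omega) hj
      unfold IsBoundaryDefect at this
      split_ifs at this ⊢ <;> omega
    · have := htop (by omega)
      rw [if_pos (by omega)]
      rw [show x.length - 1 = 2 * j by omega, show x.length = 2 * j + 1 by omega] at this
      omega
  · have := hblock (j + 1) (by omega) (by omega)
    unfold IsBlockDefect at this
    rw [show 2 * (j + 1) = 2 * j + 1 + 1 by ring, show 2 * j + 1 + 1 - 1 = 2 * j + 1 by omega]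
      at this
    split_ifs at this ⊢ <;> omega

theorem sv_mem_of_forall_not_defect (h0 : 0 ∉ I) (hx : IsSignedPerm I x)
    (hblock : ∀ j, 1 ≤ j → j ≤ x.length / 2 → ¬ IsBlockDefect x j)
    (hbound : ∀ i, 1 ≤ i → i + 1 ≤ x.length / 2 → ¬ IsBoundaryDefect x i)
    (IH : StraightenedBelow I x) :
    sv x ∈ snakeSpan I ⊔ Mrel I := by
  have htop := hblock (x.length / 2)
  unfold IsBlockDefect at htop
  by_cases hneg : ent x x.length < 0
  · have hr1 : 1 ≤ x.length := by
      by_contra h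
      rw [ent_eq_zero (by omega)] at hneg
      omega
    rcases Nat.mod_two_eq_zero_or_one x.length with hpar | hpar
    · have h := htop (by omega) le_rfl
      rw [if_neg (by omega), show 2 * (x.length / 2) = x.length by omega] at h
      have hne := hx.ent_ne_of_ne (j := x.length) (k := x.length - 1) (by omega) le_rfl
        (by omega) (by omega) (by omega)
      exact sv_mem_of_even_of_top_neg hx hpar hneg (by omega) IH
    · exact sv_mem_of_odd_of_top_neg hx hpar hneg IH
  by_cases hasc : x.length % 2 = 1 ∧ ent x x.length < ent x (x.length - 1)
  · have hr3 : 3 ≤ x.length := by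
      by_contra h
      rw [ent_eq_zero (l := x) (k := x.length - 1) (by omega)] at hasc
      omega
    have h := htop (by omega) le_rfl
    rw [if_pos hasc.1, show 2 * (x.length / 2) = x.length - 1 by omega,
      show x.length - 1 - 1 = x.length - 2 by omega] at h
    have hne := hx.ent_ne_of_ne (j := x.length - 1) (k := x.length - 2) (by omega) (by omega)
      (by omega) (by omega) (by omega)
    have hpos := hx.ent_ne_zero h0 (k := x.length) (by omega) le_rfl
    exact sv_mem_of_odd_of_top_ascent hx hasc.1 (by omega) hasc.2 (by omega) IH
  · exact Submodule.mem_sup_left (Submodule.subset_span ⟨x, isBSnake_of_forall_not_defect h0 hx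
      hblock hbound hneg fun hpar h => hasc ⟨hpar, h⟩, rfl⟩)

theorem sv_mem_snakeSpan_sup_Mrel (h0 : 0 ∉ I) (hx : IsSignedPerm I x) :
    sv x ∈ snakeSpan I ⊔ Mrel I := by
  induction x using (InvImage.wf (straighteningMeasure I) wellFounded_lt).induction with
  | _ x IH =>
  have IH' : StraightenedBelow I x := fun y hy hlt => IH y hlt hy
  by_cases hblock : ∃ j, 1 ≤ j ∧ j ≤ x.length / 2 ∧ IsBlockDefect x j
  · obtain ⟨j, hj1, hj2, hj⟩ := hblock
    exact sv_mem_of_isBlockDefect hx hj1 hj2 hj IH'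
  push Not at hblock
  by_cases hbound : ∃ i, 1 ≤ i ∧ i + 1 ≤ x.length / 2 ∧ IsBoundaryDefect x i
  · obtain ⟨i, hi1, hi2, hi⟩ := hbound
    exact sv_mem_of_isBoundaryDefect hx hi1 hi2 (hblock i hi1 (by omega))
      (hblock (i + 1) (by omega) hi2) hi IH'
  push Not at hbound
  exact sv_mem_of_forall_not_defect h0 hx hblock hbound IH'

end Straightening

/-- every signed permutation on `I` is congruent modulo `M_I` to a
`ℚ`-linear combination of `B`-snakes on `I`. -/
theorem stmt10 (I : Finset ℕ) (hI : ∀ i ∈ I, 0 < i) (x : List ℤ)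
    (hx : IsSignedPerm I x) :
    ∃ w ∈ Submodule.span ℚ {v : FreeV | ∃ y, IsBSnake I y ∧ v = sv y},
      sv x - w ∈ Mrel I := by
  have h0 : 0 ∉ I := fun h => (hI 0 h).false
  obtain ⟨w, hw, m, hm, hwm⟩ := Submodule.mem_sup.mp (sv_mem_snakeSpan_sup_Mrel h0 hx)
  exact ⟨w, hw, by rwa [← hwm, add_sub_cancel_left]⟩
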